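/- Let G be a finite group, F a field with char F not dividing |G|, H a subgroup of G, and V a finite-dimensional F H-module. Then the Noether number satisfies β(G, Ind_H^G V) ≥ β(H, V), where β(G, W) is the smallest d such that the invariant ring S(W)^G is generated as an F-algebra by its homogeneous elements of degree at most d. -/

import Mathlib

noncomputable section
open MvPolynomial

variable {F : Type} [Field F]

/-- The algebra homomorphism between polynomial algebras (viewed as symmetric algebras)
induced by a linear map between the spaces of variables (the degree one components). -/
noncomputable def algOf {α β : Type} [Fintype α] [Fintype β] [DecidableEq α]
    (f : (α → F) →ₗ[F] (β → F)) :
    MvPolynomial α F →ₐ[F] MvPolynomial β F :=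
  aeval fun j => ∑ i, f (Pi.single j 1) i • X i

/-- The embedding of the space of linear forms into the polynomial algebra. -/
noncomputable def lin {β : Type} [Fintype β] (w : β → F) : MvPolynomial β F :=
  ∑ i, w i • X i

/-- The subalgebra of `G`-invariants of the symmetric algebra of a representation. -/
def invariants {G : Type} [Group G] {α : Type} [Fintype α] [DecidableEq α]
    (ρ : Representation F G (α → F)) : Subalgebra F (MvPolynomial α F) where
  carrier := {p | ∀ g : G, algOf (ρ g) p = p}
  mul_mem' := fun ha hb g => by rw [map_mul, ha g, hb g]
  add_mem' := fun ha hb g => by rw [map_add, ha g, hb g]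
  algebraMap_mem' := fun r g => (algOf (ρ g)).commutes r

variable {G : Type} [Group G] {α : Type} [Fintype α] [DecidableEq α]

/-- The invariant ring is generated as an `F`-algebra in degrees at most `d`. -/
def genLE (ρ : Representation F G (α → F)) (d : ℕ) : Prop :=
  Algebra.adjoin F {p : MvPolynomial α F | p ∈ invariants ρ ∧ p.totalDegree ≤ d}
    = invariants ρ

/-- The Noether number `β(G,W)` of a representation. -/
def noether (ρ : Representation F G (α → F)) : ℕ := sInf {d | genLE ρ d}

/-- The Hilbert ideal: the ideal of `S(W)` generated by the invariants of positive degree. -/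
def hilbertIdeal (ρ : Representation F G (α → F)) : Ideal (MvPolynomial α F) :=
  Ideal.span {p | p ∈ invariants ρ ∧ constantCoeff p = 0}

/-- `b(G,W)`: the top degree of the algebra of coinvariants `S(W)/S(W)₊^G S(W)`. -/
def coinvTop (ρ : Representation F G (α → F)) : ℕ :=
  sSup {d | ∃ p : MvPolynomial α F, p.IsHomogeneous d ∧ p ∉ hilbertIdeal ρ}

/-- `b_k(G,W)`: the top degree of `S(W)/((S(W)₊^G)^k S(W))`. -/
def coinvTopK (ρ : Representation F G (α → F)) (k : ℕ) : ℕ :=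
  sSup {d | ∃ p : MvPolynomial α F, p.IsHomogeneous d ∧ p ∉ (hilbertIdeal ρ) ^ k}

/-- The span of all products of `k` positive-degree invariants,
i.e. `(S(W)₊^G)^k` computed inside the invariant ring. -/
def prodPow (ρ : Representation F G (α → F)) (k : ℕ) : Submodule F (MvPolynomial α F) :=
  Submodule.span F {x | ∃ f : Fin k → MvPolynomial α F,
    (∀ i, f i ∈ invariants ρ ∧ constantCoeff (f i) = 0) ∧ x = ∏ i, f i}

/-- The `k`-th Noether number `β_k(G,W)`, the top degree of `S(W)^G/(S(W)₊^G)^{k+1}`. -/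
def noetherK (ρ : Representation F G (α → F)) (k : ℕ) : ℕ :=
  sSup {d | ∃ p, p ∈ invariants ρ ∧ p.IsHomogeneous d ∧ p ∉ prodPow ρ (k+1)}

/-- `β(G)`: the supremum of the Noether numbers over all finite dimensional modules. -/
def noetherSup (F G : Type) [Field F] [Group G] : ℕ∞ :=
  ⨆ (n : ℕ) (ρ : Representation F G (Fin n → F)), (noether ρ : ℕ∞)

/-- `b(G)`: the supremum of `b(G,W)` over all finite dimensional modules. -/
def coinvSup (F G : Type) [Field F] [Group G] : ℕ∞ :=
  ⨆ (n : ℕ) (ρ : Representation F G (Fin n → F)), (coinvTop ρ : ℕ∞)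

/-- `β_k(G)`: the supremum of the `k`-th Noether numbers over all modules. -/
def noetherKSup (F G : Type) [Field F] [Group G] (k : ℕ) : ℕ∞ :=
  ⨆ (n : ℕ) (ρ : Representation F G (Fin n → F)), (noetherK ρ k : ℕ∞)

/-! Let `π : W → V` be the projection of `W = Ind_H^G V = ⨁_{c ∈ C} c·V` onto its summand `V`.
Then `π ∘ g ∘ ι` is `ρ g` for `g ∈ H` and `0` for `g ∉ H`; in particular `π` is `H`-equivariant.
For `f ∈ S(V)^H` the `G`-invariant `∑_g g·ι(f)` is therefore sent by `π` to `|H| f` plus a constant,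
so the degree-nonincreasing algebra map `S(π)` maps `S(W)^G` onto `S(V)^H` and carries generators
of degree `≤ d` to generators of degree `≤ d`. That `β(G,W)` is attained at all (rather than being
the junk value `sInf ∅ = 0`) is Hilbert's finite generation argument with the Reynolds operator,
which needs `char F ∤ |G|`. -/
section AlgOf

variable {β γ : Type} [Fintype β] [Fintype γ]

lemma lin_eq_linearCombination (w : β → F) : lin w = Fintype.linearCombination F X w := rfl

lemma algOf_X (f : (α → F) →ₗ[F] (β → F)) (j : α) : algOf f (X j) = lin (f (Pi.single j 1)) := by
  simp [algOf, lin]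

lemma algOf_lin (f : (α → F) →ₗ[F] (β → F)) (w : α → F) : algOf f (lin w) = lin (f w) := by
  conv_rhs => rw [pi_eq_sum_univ' w]
  simp only [lin_eq_linearCombination, map_sum, map_smul, Fintype.linearCombination_apply,
    algOf_X]

lemma algOf_comp [DecidableEq β] (f₂ : (β → F) →ₗ[F] (γ → F)) (f₁ : (α → F) →ₗ[F] (β → F))
    (p : MvPolynomial α F) : algOf f₂ (algOf f₁ p) = algOf (f₂ ∘ₗ f₁) p := by
  suffices (algOf f₂).comp (algOf f₁) = algOf (f₂ ∘ₗ f₁) from AlgHom.congr_fun this p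
  refine algHom_ext fun j => ?_
  rw [AlgHom.comp_apply, algOf_X, algOf_X, algOf_lin, LinearMap.comp_apply]

lemma algOf_zero (p : MvPolynomial α F) :
    algOf (0 : (α → F) →ₗ[F] (β → F)) p = C (constantCoeff p) := by
  simp only [algOf, LinearMap.zero_apply, Pi.zero_apply, zero_smul, Finset.sum_const_zero]
  exact aeval_zero' p

lemma isHomogeneous_lin (w : β → F) : (lin w).IsHomogeneous 1 :=
  IsHomogeneous.sum Finset.univ (fun i => w i • X i) 1 fun i _ => by
    simpa [smul_eq_C_mul] using isHomogeneous_C_mul_X (R := F) (w i) i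

lemma MvPolynomial.IsHomogeneous.algOf (f : (α → F) →ₗ[F] (β → F)) {p : MvPolynomial α F} {n : ℕ}
    (hp : p.IsHomogeneous n) : (algOf f p).IsHomogeneous n := by
  simpa [_root_.algOf, lin] using hp.aeval _ fun j => isHomogeneous_lin (f (Pi.single j 1))

lemma algOf_homogeneousComponent (f : (α → F) →ₗ[F] (β → F)) (n : ℕ) (p : MvPolynomial α F) :
    algOf f (homogeneousComponent n p) = homogeneousComponent n (algOf f p) := by
  induction p using MvPolynomial.induction_on' with
  | monomial d c =>
    have hd := isHomogeneous_monomial c (rfl : d.degree = d.degree)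
    rw [homogeneousComponent_of_mem hd, homogeneousComponent_of_mem (hd.algOf f)]
    split_ifs <;> simp
  | add p q hp hq => simp [hp, hq]

lemma totalDegree_algOf_le (f : (α → F) →ₗ[F] (β → F)) (p : MvPolynomial α F) :
    (algOf f p).totalDegree ≤ p.totalDegree := by
  conv_lhs => rw [← sum_homogeneousComponent p, map_sum]
  refine totalDegree_finsetSum_le fun i hi => ?_
  exact ((homogeneousComponent_isHomogeneous i p).algOf f).totalDegree_le.trans
    (by simpa [Nat.lt_succ_iff] using hi)

end AlgOf

lemma MvPolynomial.homogeneousComponent_mul_of_isHomogeneous_right {σ R : Type*} [CommSemiring R]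
    {q t : MvPolynomial σ R} {d : ℕ} (ht : t.IsHomogeneous d) (n : ℕ) :
    homogeneousComponent n (q * t) = if d ≤ n then homogeneousComponent (n - d) q * t else 0 := by
  induction q using MvPolynomial.induction_on' with
  | monomial e c =>
    have he := isHomogeneous_monomial c (rfl : e.degree = e.degree)
    rw [homogeneousComponent_of_mem (he.mul ht), homogeneousComponent_of_mem he]
    split_ifs <;> first | rfl | (exfalso; omega)
  | add p q hp hq => split_ifs at hp hq ⊢ <;> simp [add_mul, hp, hq]

section Reynolds

variable {β : Type} [Fintype β] [DecidableEq β] (σ : Representation F G (β → F))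

lemma algOf_rep_mul (g₁ g₂ : G) (p : MvPolynomial β F) :
    algOf (σ g₁) (algOf (σ g₂) p) = algOf (σ (g₁ * g₂)) p := by
  rw [algOf_comp, map_mul, Module.End.mul_eq_comp]

lemma sum_algOf_mem_invariants [Fintype G] (q : MvPolynomial β F) :
    ∑ g : G, algOf (σ g) q ∈ invariants σ := fun g₀ => by
  simp_rw [map_sum, algOf_rep_mul]
  exact Fintype.sum_bijective (g₀ * ·) (Group.mulLeft_bijective g₀) _ _ fun _ => rfl

lemma homogeneousComponent_mem_invariants {p : MvPolynomial β F} (hp : p ∈ invariants σ)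
    (n : ℕ) : homogeneousComponent n p ∈ invariants σ := fun g => by
  rw [algOf_homogeneousComponent, hp g]

noncomputable def reynolds [Fintype G] : MvPolynomial β F →ₗ[F] MvPolynomial β F :=
  (Fintype.card G : F)⁻¹ • ∑ g : G, (algOf (σ g)).toLinearMap

variable [Fintype G]

lemma reynolds_apply (p : MvPolynomial β F) :
    reynolds σ p = (Fintype.card G : F)⁻¹ • ∑ g : G, algOf (σ g) p := by
  simp [reynolds, LinearMap.sum_apply]

lemma reynolds_mem_invariants (p : MvPolynomial β F) : reynolds σ p ∈ invariants σ := by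
  rw [reynolds_apply]
  exact Subalgebra.smul_mem _ (sum_algOf_mem_invariants σ p) _

variable {σ}

lemma reynolds_eq_self (hchar : (Fintype.card G : F) ≠ 0) {p : MvPolynomial β F}
    (hp : p ∈ invariants σ) : reynolds σ p = p := by
  simp only [reynolds_apply, hp _, Finset.sum_const, Finset.card_univ, ← Nat.cast_smul_eq_nsmul F,
    smul_smul, inv_mul_cancel₀ hchar, one_smul]

lemma reynolds_mul_of_mem {t : MvPolynomial β F} (ht : t ∈ invariants σ) (q : MvPolynomial β F) :
    reynolds σ (q * t) = reynolds σ q * t := by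
  simp only [reynolds_apply, smul_mul_assoc, Finset.sum_mul, map_mul, ht _]

lemma MvPolynomial.IsHomogeneous.reynolds {p : MvPolynomial β F} {n : ℕ}
    (hp : p.IsHomogeneous n) : (_root_.reynolds σ p).IsHomogeneous n := by
  rw [reynolds_apply, smul_eq_C_mul]
  exact (IsHomogeneous.sum _ _ _ fun g _ => hp.algOf _).C_mul _

end Reynolds

section FiniteGeneration

variable {β : Type} [Fintype β] [DecidableEq β] {σ : Representation F G (β → F)}

variable (σ) in
def posHomogeneousInvariants : Set (MvPolynomial β F) :=
  {p | p ∈ invariants σ ∧ ∃ n, 0 < n ∧ p.IsHomogeneous n}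

variable [Fintype G]

lemma mem_of_isHomogeneous_of_span_le (hchar : (Fintype.card G : F) ≠ 0)
    {T : Set (MvPolynomial β F)} (hT : T ⊆ posHomogeneousInvariants σ)
    (hspan : Ideal.span (posHomogeneousInvariants σ) ≤ Ideal.span T)
    {A : Subalgebra F (MvPolynomial β F)} (hTA : T ⊆ A) (n : ℕ) :
    ∀ p ∈ invariants σ, p.IsHomogeneous n → p ∈ A := by
  induction n using Nat.strong_induction_on with
  | _ n ih =>
  intro p hp hpn
  rcases Nat.eq_zero_or_pos n with rfl | hn
  · rw [totalDegree_eq_zero_iff_eq_C.1 (Nat.le_zero.1 hpn.totalDegree_le), ← algebraMap_eq]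
    exact A.algebraMap_mem _
  obtain ⟨k, f, g, hfg⟩ :=
    Submodule.mem_span_set'.1 (hspan (Ideal.subset_span ⟨hp, n, hn, hpn⟩))
  rw [← reynolds_eq_self hchar hp, ← homogeneousComponent_eq_self hpn, ← hfg]
  simp only [map_sum, smul_eq_mul]
  refine A.sum_mem fun i _ => ?_
  obtain ⟨hgi, d, hd, hgd⟩ := hT (g i).2
  rw [homogeneousComponent_mul_of_isHomogeneous_right hgd]
  split_ifs with hdn
  · rw [reynolds_mul_of_mem hgi]
    exact A.mul_mem (ih _ (by omega) _ (reynolds_mem_invariants σ _)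
      (homogeneousComponent_isHomogeneous _ _).reynolds) (hTA (g i).2)
  · rw [map_zero]
    exact A.zero_mem

variable (σ) in
lemma exists_genLE (hchar : (Fintype.card G : F) ≠ 0) : ∃ d, genLE σ d := by
  obtain ⟨T, hTsub, hTspan⟩ := (Submodule.fg_span_iff_fg_span_finset_subset _).1
    (IsNoetherian.noetherian (Ideal.span (posHomogeneousInvariants σ)))
  set d := T.sup totalDegree
  have hTA : (T : Set (MvPolynomial β F)) ⊆
      Algebra.adjoin F {p | p ∈ invariants σ ∧ p.totalDegree ≤ d} :=
    fun x hx => Algebra.subset_adjoin ⟨(hTsub hx).1, Finset.le_sup hx⟩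
  refine ⟨d, le_antisymm (Algebra.adjoin_le fun p hp => hp.1) fun p hp => ?_⟩
  rw [← sum_homogeneousComponent p]
  exact Subalgebra.sum_mem _ fun n _ =>
    mem_of_isHomogeneous_of_span_le hchar hTsub hTspan.le hTA n _
      (homogeneousComponent_mem_invariants σ hp n) (homogeneousComponent_isHomogeneous n p)

end FiniteGeneration

section Induced

variable {R V W : Type*} [CommRing R] [AddCommGroup V] [Module R V] [AddCommGroup W] [Module R W]
  {H : Subgroup G} {ρ : Representation R H V} {σ : Representation R G W} {ι : V →ₗ[R] W}

lemma exists_projection_of_isInduced (hι : Function.Injective ι)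
    (hequiv : ∀ h : H, σ h ∘ₗ ι = ι ∘ₗ ρ h)
    {C : Set G} (hC : Subgroup.IsComplement C (H : Set G)) (h1 : (1 : G) ∈ C)
    (hindep : iSupIndep fun c : C => (LinearMap.range ι).map (σ c.1))
    (hspan : ⨆ c : C, (LinearMap.range ι).map (σ c.1) = ⊤) :
    ∃ π : W →ₗ[R] V, (∀ (h : H) v, π (σ h (ι v)) = ρ h v) ∧ ∀ g ∉ H, ∀ v, π (σ g (ι v)) = 0 := by
  let U : C → Submodule R W := fun c => (LinearMap.range ι).map (σ c.1)
  have hU1 : U ⟨1, h1⟩ = LinearMap.range ι := by simp [U, Module.End.one_eq_id]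
  have hcompl : IsCompl (LinearMap.range ι) (⨆ (c) (_ : c ≠ ⟨1, h1⟩), U c) :=
    hU1 ▸ ⟨hindep ⟨1, h1⟩, codisjoint_iff.2 (by rw [← iSup_split_single, hspan])⟩
  let e := LinearEquiv.ofInjective ι hι
  refine ⟨LinearMap.ofIsCompl hcompl e.symm.toLinearMap 0, fun h v => ?_, fun g hg v => ?_⟩
  · have : σ h (ι v) = e (ρ h v) := LinearMap.congr_fun (hequiv h) v
    rw [this, LinearMap.ofIsCompl_apply_left]
    simp
  · -- writing `g = c * h` with `c ∈ C` and `h ∈ H`, we get `c ≠ 1` and `σ g (ι v) ∈ U c`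
    set c := (hC.equiv g).1
    have hc : c ≠ ⟨1, h1⟩ := fun hc1 =>
      hg ((hC.coe_equiv_fst_eq_one_iff_mem h1).1 (congrArg Subtype.val hc1))
    have hmem : σ g (ι v) ∈ U c := by
      rw [← hC.equiv_fst_mul_equiv_snd g, map_mul, Module.End.mul_apply]
      exact Submodule.mem_map_of_mem ⟨_, (LinearMap.congr_fun (hequiv (hC.equiv g).2) v).symm⟩
    have hK : σ g (ι v) ∈ ⨆ (c) (_ : c ≠ ⟨1, h1⟩), U c :=
      (le_iSup₂_of_le c hc le_rfl : U c ≤ _) hmem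
    simpa using LinearMap.ofIsCompl_apply_right hcompl (φ := e.symm.toLinearMap) (ψ := 0) ⟨_, hK⟩

variable {π : W →ₗ[R] V}

lemma rep_comp_eq_comp_rep_of_projection (hπH : ∀ (h : H) v, π (σ h (ι v)) = ρ h v)
    (hπ : ∀ g ∉ H, ∀ v, π (σ g (ι v)) = 0) {C : Set G}
    (hspan : ⨆ c : C, (LinearMap.range ι).map (σ c.1) = ⊤) (h : H) :
    ρ h ∘ₗ π = π ∘ₗ σ h := by
  refine LinearMap.ext fun x => ?_
  have hx : x ∈ ⨆ c : C, (LinearMap.range ι).map (σ c.1) := hspan ▸ Submodule.mem_top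
  refine (iSup_le fun c => ?_ : _ ≤ LinearMap.eqLocus (ρ h ∘ₗ π) (π ∘ₗ σ h)) hx
  rintro _ ⟨_, ⟨v, rfl⟩, rfl⟩
  change ρ h (π (σ c (ι v))) = π (σ h (σ c (ι v)))
  rw [← Module.End.mul_apply, ← map_mul]
  by_cases hc : c.1 ∈ H
  · rw [hπH ⟨c, hc⟩, ← Module.End.mul_apply, ← map_mul]
    exact (hπH (h * ⟨c, hc⟩) v).symm
  · have hhc : h * c.1 ∉ H := fun hm => hc (by simpa using H.mul_mem (H.inv_mem h.2) hm)
    rw [hπ _ hc, hπ _ hhc, map_zero]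

end Induced

section Transfer

variable {β : Type} [Fintype β] [DecidableEq β] {H : Subgroup G}
  {ρ : Representation F H (α → F)} {σ : Representation F G (β → F)} {π : (β → F) →ₗ[F] (α → F)}

lemma algOf_mem_invariants_of_comp_eq (hπ : ∀ h : H, ρ h ∘ₗ π = π ∘ₗ σ h)
    {x : MvPolynomial β F} (hx : x ∈ invariants σ) : algOf π x ∈ invariants ρ := fun h => by
  rw [algOf_comp, hπ h, ← algOf_comp, hx]

lemma invariants_le_map_algOf [Fintype G] (hH : (Nat.card H : F) ≠ 0) {ι : (α → F) →ₗ[F] (β → F)}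
    (hπH : ∀ (h : H) v, π (σ h (ι v)) = ρ h v) (hπ : ∀ g ∉ H, ∀ v, π (σ g (ι v)) = 0) :
    invariants ρ ≤ (invariants σ).map (algOf π) := by
  classical
  intro p hp
  have hterm (g : G) :
      algOf π (algOf (σ g) (algOf ι p)) = if g ∈ H then p else C (constantCoeff p) := by
    rw [algOf_comp, algOf_comp]
    split_ifs with hg
    · rw [show (π ∘ₗ σ g) ∘ₗ ι = ρ ⟨g, hg⟩ from LinearMap.ext (hπH ⟨g, hg⟩), hp]
    · rw [show (π ∘ₗ σ g) ∘ₗ ι = 0 from LinearMap.ext (hπ g hg), algOf_zero]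
  set k := (Finset.univ.filter fun g : G => g ∉ H).card
  have hsum : algOf π (∑ g, algOf (σ g) (algOf ι p))
      = (Nat.card H : F) • p + algebraMap F _ (k • constantCoeff p) := by
    have hcard : (Finset.univ.filter fun g : G => g ∈ H).card = Nat.card H := by
      rw [Nat.card_eq_fintype_card, Fintype.card_subtype]
    simp only [map_sum, hterm, Finset.sum_ite, Finset.sum_const, ← Nat.cast_smul_eq_nsmul F,
      algebraMap_eq, hcard, smul_eq_mul, C_mul, ← smul_eq_C_mul]
    rfl
  refine ⟨(Nat.card H : F)⁻¹ • (∑ g, algOf (σ g) (algOf ι p)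
      - algebraMap F _ (k • constantCoeff p)), ?_, ?_⟩
  · exact Subalgebra.smul_mem _
      (Subalgebra.sub_mem _ (sum_algOf_mem_invariants σ _) (Subalgebra.algebraMap_mem _ _)) _
  · simp only [RingHom.coe_coe, map_smul, map_sub, AlgHom.commutes, hsum,
      add_sub_cancel_right, smul_smul, inv_mul_cancel₀ hH, one_smul]

end Transfer

lemma genLE_of_map_eq {β K : Type} [Fintype β] [DecidableEq β] [Group K]
    {ρ : Representation F K (α → F)} {σ : Representation F G (β → F)}
    (π : (β → F) →ₗ[F] (α → F)) (hmap : (invariants σ).map (algOf π) = invariants ρ) {d : ℕ}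
    (hd : genLE σ d) : genLE ρ d := by
  refine le_antisymm (Algebra.adjoin_le fun p hp => hp.1) ?_
  calc invariants ρ
      = (Algebra.adjoin F {x | x ∈ invariants σ ∧ x.totalDegree ≤ d}).map (algOf π) := by
        rw [hd, hmap]
    _ = Algebra.adjoin F (algOf π '' {x | x ∈ invariants σ ∧ x.totalDegree ≤ d}) :=
        AlgHom.map_adjoin _ _
    _ ≤ _ := Algebra.adjoin_mono <| by
        rintro _ ⟨x, ⟨hx, hxd⟩, rfl⟩
        exact ⟨hmap ▸ Subalgebra.mem_map.2 ⟨x, hx, rfl⟩, (totalDegree_algOf_le π x).trans hxd⟩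

/-- `σ` on `F^m` is the induced module `Ind_H^G V`: it contains `V = F^(nV)` as an `H`-submodule
via the equivariant embedding `ι`, and is the direct sum of the translates `g·V` over a left
transversal `C`. -/
theorem stmt0
    {G : Type} [Group G] [Fintype G]
    (hchar : (Fintype.card G : F) ≠ 0)
    (H : Subgroup G) {nV m : ℕ}
    (ρ : Representation F H (Fin nV → F))
    (σ : Representation F G (Fin m → F))
    (ι : (Fin nV → F) →ₗ[F] (Fin m → F)) (hι : Function.Injective ι)
    (hequiv : ∀ h : H, σ h ∘ₗ ι = ι ∘ₗ ρ h)
    (C : Set G) (hC : Subgroup.IsComplement C (H : Set G)) (h1 : (1:G) ∈ C)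
    (hindep : iSupIndep fun c : C => (LinearMap.range ι).map (σ c.1))
    (hspan : ⨆ c : C, (LinearMap.range ι).map (σ c.1) = ⊤) :
    noether ρ ≤ noether σ := by
  obtain ⟨π, hπH, hπ⟩ := exists_projection_of_isInduced hι hequiv hC h1 hindep hspan
  have hH : (Nat.card H : F) ≠ 0 :=
    ne_zero_of_dvd_ne_zero (Nat.card_eq_fintype_card (α := G) ▸ hchar)
      (Nat.cast_dvd_cast H.card_subgroup_dvd_card)
  have hmap : (invariants σ).map (algOf π) = invariants ρ :=
    le_antisymm
      (Subalgebra.map_le.2 fun _ =>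
        algOf_mem_invariants_of_comp_eq (rep_comp_eq_comp_rep_of_projection hπH hπ hspan))
      (invariants_le_map_algOf hH hπH hπ)
  exact Nat.sInf_le (genLE_of_map_eq π hmap (Nat.sInf_mem (exists_genLE σ hchar)))

end
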